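/- Let K be the fractal 3-cube of order 3 with digit set D = {(0,1,1), (1,0,1), (1,1,0), (1,1,1), (1,1,2), (1,2,1), (2,1,1)} and let K′ be the fractal 3-cube of order 3 with digit set D′ = {(0,0,0), (0,0,1), (1,0,1), (1,1,1), (1,2,1), (2,2,1), (2,2,2)}. Then there exists a bi-Lipschitz homeomorphism φ : K → K′. -/

import Mathlib

open Pointwise

/-- `ℝ³` as Euclidean space. -/
abbrev E3 := EuclideanSpace ℝ (Fin 3)

/-- The vector `(a, b, c) ∈ ℝ³`. -/
noncomputable def v3 (a b c : ℝ) : E3 := (WithLp.equiv 2 (Fin 3 → ℝ)).symm ![a, b, c]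

/-- The affine map `T x = (x₀+x₁−½, x₀+x₁+x₂−1, x₁)` whose linear part sends the
centered digit set of the first fractal cube to that of the second. -/
noncomputable def Tmap (x : E3) : E3 := v3 (x 0 + x 1 - 2⁻¹) (x 0 + x 1 + x 2 - 1) (x 1)

lemma v3_apply0 (a b c : ℝ) : v3 a b c 0 = a := by simp [v3]
lemma v3_apply1 (a b c : ℝ) : v3 a b c 1 = b := by simp [v3]
lemma v3_apply2 (a b c : ℝ) : v3 a b c 2 = c := by simp [v3]

lemma Tmap_apply0 (x : E3) : Tmap x 0 = x 0 + x 1 - 2⁻¹ := v3_apply0 _ _ _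
lemma Tmap_apply1 (x : E3) : Tmap x 1 = x 0 + x 1 + x 2 - 1 := v3_apply1 _ _ _
lemma Tmap_apply2 (x : E3) : Tmap x 2 = x 1 := v3_apply2 _ _ _

lemma e3_ext {x y : E3} (h0 : x 0 = y 0) (h1 : x 1 = y 1) (h2 : x 2 = y 2) : x = y := by
  refine PiLp.ext fun i => ?_
  fin_cases i <;> assumption

lemma Tmap_injective : Function.Injective Tmap := by
  intro x y h
  have h0 := congrArg (fun z : E3 => z 0) h
  have h1 := congrArg (fun z : E3 => z 1) h
  have h2 := congrArg (fun z : E3 => z 2) h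
  simp only [Tmap_apply0, Tmap_apply1, Tmap_apply2] at h0 h1 h2
  exact e3_ext (by linarith) (by linarith) (by linarith)

lemma Tmap_continuous : Continuous Tmap := by
  unfold Tmap v3
  refine (PiLp.continuous_toLp 2 (fun _ : Fin 3 => ℝ)).comp ?_
  refine continuous_pi fun i => ?_
  have c0 : Continuous fun x : E3 => x 0 :=
    (continuous_apply (0 : Fin 3)).comp (PiLp.continuous_ofLp 2 (fun _ : Fin 3 => ℝ))
  have c1 : Continuous fun x : E3 => x 1 :=
    (continuous_apply (1 : Fin 3)).comp (PiLp.continuous_ofLp 2 (fun _ : Fin 3 => ℝ))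
  have c2 : Continuous fun x : E3 => x 2 :=
    (continuous_apply (2 : Fin 3)).comp (PiLp.continuous_ofLp 2 (fun _ : Fin 3 => ℝ))
  fin_cases i <;> simp <;> fun_prop

/-- The key algebraic identity: if `3k = a + d` then `3 T(k) = T(a) + d'` where
`d' = (d₀+d₁−1, d₀+d₁+d₂−2, d₁)`. -/
lemma Tmap_key {k a : E3} {d0 d1 d2 e0 e1 e2 : ℝ}
    (h : (3 : ℝ) • k = a + v3 d0 d1 d2)
    (h0 : d0 + d1 - 1 = e0) (h1 : d0 + d1 + d2 - 2 = e1) (h2 : d1 = e2) :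
    (3 : ℝ) • Tmap k = Tmap a + v3 e0 e1 e2 := by
  have g0 := congrArg (fun z : E3 => z 0) h
  have g1 := congrArg (fun z : E3 => z 1) h
  have g2 := congrArg (fun z : E3 => z 2) h
  simp only [PiLp.smul_apply, PiLp.add_apply, smul_eq_mul,
    v3_apply0, v3_apply1, v3_apply2] at g0 g1 g2
  refine e3_ext ?_ ?_ ?_ <;>
    simp only [PiLp.smul_apply, PiLp.add_apply, smul_eq_mul,
      Tmap_apply0, Tmap_apply1, Tmap_apply2, v3_apply0, v3_apply1, v3_apply2] <;>
    linarith

/-- Uniqueness of the compact attractor of `3 • s = s + P`. -/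
lemma attractor_unique (P s t : Set E3) (hsne : s.Nonempty) (hsc : IsCompact s)
    (htne : t.Nonempty) (htc : IsCompact t)
    (hs : (3 : ℝ) • s = s + P) (ht : (3 : ℝ) • t = t + P) : s = t := by
  set r := EMetric.hausdorffEdist s t with hr
  have hrne : r ≠ ⊤ :=
    Metric.hausdorffEdist_ne_top_of_nonempty_of_bounded hsne htne hsc.isBounded htc.isBounded
  -- translation step
  have step2 : EMetric.hausdorffEdist (s + P) (t + P) ≤ r := by
    refine EMetric.hausdorffEdist_le_of_infEdist ?_ ?_
    · rintro x hx
      rcases Set.mem_add.1 hx with ⟨a, ha, p, hp, rfl⟩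
      have hsub : (fun y => y + p) '' t ⊆ t + P := by
        rintro _ ⟨y, hy, rfl⟩; exact Set.mem_add.2 ⟨y, hy, p, hp, rfl⟩
      calc EMetric.infEdist (a + p) (t + P)
          ≤ EMetric.infEdist (a + p) ((fun y => y + p) '' t) := EMetric.infEdist_anti hsub
        _ = EMetric.infEdist a t :=
            EMetric.infEdist_image (Isometry.of_dist_eq fun x y => dist_add_right x y p)
        _ ≤ r := EMetric.infEdist_le_hausdorffEdist_of_mem ha
    · rintro x hx
      rcases Set.mem_add.1 hx with ⟨a, ha, p, hp, rfl⟩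
      have hsub : (fun y => y + p) '' s ⊆ s + P := by
        rintro _ ⟨y, hy, rfl⟩; exact Set.mem_add.2 ⟨y, hy, p, hp, rfl⟩
      calc EMetric.infEdist (a + p) (s + P)
          ≤ EMetric.infEdist (a + p) ((fun y => y + p) '' s) := EMetric.infEdist_anti hsub
        _ = EMetric.infEdist a s :=
            EMetric.infEdist_image (Isometry.of_dist_eq fun x y => dist_add_right x y p)
        _ ≤ r :=
            (EMetric.infEdist_le_hausdorffEdist_of_mem ha).trans_eq
              EMetric.hausdorffEdist_comm
  -- scaling step
  have hscale : ∀ A B : Set E3, EMetric.hausdorffEdist ((3 : ℝ)⁻¹ • A) ((3 : ℝ)⁻¹ • B)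
      ≤ (‖(3 : ℝ)⁻¹‖₊ : ENNReal) * EMetric.hausdorffEdist A B := by
    intro A B
    refine EMetric.hausdorffEdist_le_of_infEdist ?_ ?_
    · rintro x hx
      rcases Set.mem_smul_set.1 hx with ⟨a, ha, rfl⟩
      rw [infEdist_smul₀ (by norm_num : ((3:ℝ)⁻¹) ≠ 0) B a, ENNReal.smul_def, smul_eq_mul]
      exact mul_le_mul_right (EMetric.infEdist_le_hausdorffEdist_of_mem ha) _
    · rintro x hx
      rcases Set.mem_smul_set.1 hx with ⟨a, ha, rfl⟩
      rw [infEdist_smul₀ (by norm_num : ((3:ℝ)⁻¹) ≠ 0) A a, ENNReal.smul_def, smul_eq_mul]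
      exact mul_le_mul_right ((EMetric.infEdist_le_hausdorffEdist_of_mem ha).trans_eq EMetric.hausdorffEdist_comm) _
  have hss : (3 : ℝ)⁻¹ • ((3 : ℝ) • s) = s := by rw [smul_smul]; norm_num
  have hts : (3 : ℝ)⁻¹ • ((3 : ℝ) • t) = t := by rw [smul_smul]; norm_num
  have hchain : r ≤ (‖(3 : ℝ)⁻¹‖₊ : ENNReal) * r := by
    calc r = EMetric.hausdorffEdist ((3:ℝ)⁻¹ • ((3:ℝ) • s)) ((3:ℝ)⁻¹ • ((3:ℝ) • t)) := by
            rw [hss, hts]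
      _ ≤ (‖(3 : ℝ)⁻¹‖₊ : ENNReal) * EMetric.hausdorffEdist ((3:ℝ) • s) ((3:ℝ) • t) :=
            hscale _ _
      _ = (‖(3 : ℝ)⁻¹‖₊ : ENNReal) * EMetric.hausdorffEdist (s + P) (t + P) := by
            rw [hs, ht]
      _ ≤ (‖(3 : ℝ)⁻¹‖₊ : ENNReal) * r := mul_le_mul_right step2 _
  have hr0 : r = 0 := by
    by_contra h0
    have hlt : (‖(3 : ℝ)⁻¹‖₊ : ENNReal) * r < 1 * r := by
      refine ENNReal.mul_lt_mul_left h0 hrne ?_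
      rw [show ((1 : ENNReal)) = ((1 : NNReal) : ENNReal) by simp]
      refine ENNReal.coe_lt_coe.2 ?_
      rw [← NNReal.coe_lt_coe]
      simp [Real.norm_eq_abs, abs_of_nonneg]
      norm_num
    rw [one_mul] at hlt
    exact absurd hchain (not_le.2 hlt)
  exact (EMetric.hausdorffEdist_zero_iff_eq_of_closed hsc.isClosed htc.isClosed).1 hr0

/-- The fractal 3-cubes of order 3 with digit sets
`D = {(0,1,1), (1,0,1), (1,1,0), (1,1,1), (1,1,2), (1,2,1), (2,1,1)}` and
`D′ = {(0,0,0), (0,0,1), (1,0,1), (1,1,1), (1,2,1), (2,2,1), (2,2,2)}` are bi-Lipschitz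
homeomorphic. -/
theorem biLipschitz_between_two_fractal_cubes
    (K K' : Set E3)
    (hne : K.Nonempty) (hcomp : IsCompact K)
    (hfc : (3 : ℝ) • K = K + ({v3 0 1 1, v3 1 0 1, v3 1 1 0, v3 1 1 1,
      v3 1 1 2, v3 1 2 1, v3 2 1 1} : Set E3))
    (hne' : K'.Nonempty) (hcomp' : IsCompact K')
    (hfc' : (3 : ℝ) • K' = K' + ({v3 0 0 0, v3 0 0 1, v3 1 0 1, v3 1 1 1,
      v3 1 2 1, v3 2 2 1, v3 2 2 2} : Set E3)) :
    ∃ (φ : K → K') (L : ℝ), 1 ≤ L ∧ Function.Bijective φ ∧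
      ∀ x y : K, L⁻¹ * ‖(x : E3) - (y : E3)‖ ≤ ‖(φ x : E3) - (φ y : E3)‖ ∧
        ‖(φ x : E3) - (φ y : E3)‖ ≤ L * ‖(x : E3) - (y : E3)‖ := by
  set D : Set E3 := {v3 0 1 1, v3 1 0 1, v3 1 1 0, v3 1 1 1, v3 1 1 2, v3 1 2 1, v3 2 1 1}
  set D' : Set E3 := {v3 0 0 0, v3 0 0 1, v3 1 0 1, v3 1 1 1, v3 1 2 1, v3 2 2 1, v3 2 2 2}
  -- the image of K under Tmap satisfies the second functional equation
  have himg : (3 : ℝ) • (Tmap '' K) = Tmap '' K + D' := by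
    ext x
    constructor
    · rintro hx
      rcases Set.mem_smul_set.1 hx with ⟨_, ⟨k, hk, rfl⟩, rfl⟩
      have h3k : (3 : ℝ) • k ∈ K + D := by rw [← hfc]; exact Set.smul_mem_smul_set hk
      rcases Set.mem_add.1 h3k with ⟨a, ha, d, hd, had⟩
      have had' : (3 : ℝ) • k = a + d := had.symm
      simp only [D, Set.mem_insert_iff, Set.mem_singleton_iff] at hd
      rcases hd with rfl | rfl | rfl | rfl | rfl | rfl | rfl
      · exact Set.mem_add.2 ⟨Tmap a, Set.mem_image_of_mem _ ha, v3 0 0 1, by simp [D'],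
          (Tmap_key had' (by norm_num) (by norm_num) (by norm_num)).symm⟩
      · exact Set.mem_add.2 ⟨Tmap a, Set.mem_image_of_mem _ ha, v3 0 0 0, by simp [D'],
          (Tmap_key had' (by norm_num) (by norm_num) (by norm_num)).symm⟩
      · exact Set.mem_add.2 ⟨Tmap a, Set.mem_image_of_mem _ ha, v3 1 0 1, by simp [D'],
          (Tmap_key had' (by norm_num) (by norm_num) (by norm_num)).symm⟩
      · exact Set.mem_add.2 ⟨Tmap a, Set.mem_image_of_mem _ ha, v3 1 1 1, by simp [D'],
          (Tmap_key had' (by norm_num) (by norm_num) (by norm_num)).symm⟩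
      · exact Set.mem_add.2 ⟨Tmap a, Set.mem_image_of_mem _ ha, v3 1 2 1, by simp [D'],
          (Tmap_key had' (by norm_num) (by norm_num) (by norm_num)).symm⟩
      · exact Set.mem_add.2 ⟨Tmap a, Set.mem_image_of_mem _ ha, v3 2 2 2, by simp [D'],
          (Tmap_key had' (by norm_num) (by norm_num) (by norm_num)).symm⟩
      · exact Set.mem_add.2 ⟨Tmap a, Set.mem_image_of_mem _ ha, v3 2 2 1, by simp [D'],
          (Tmap_key had' (by norm_num) (by norm_num) (by norm_num)).symm⟩
    · rintro hx
      rcases Set.mem_add.1 hx with ⟨_, ⟨a, ha, rfl⟩, d', hd', rfl⟩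
      simp only [D', Set.mem_insert_iff, Set.mem_singleton_iff] at hd'
      -- helper: given the matching d ∈ D, produce the preimage point
      have main : ∀ d0 d1 d2 : ℝ, v3 d0 d1 d2 ∈ D →
          d0 + d1 - 1 = d' 0 → d0 + d1 + d2 - 2 = d' 1 → d1 = d' 2 →
          Tmap a + d' ∈ (3 : ℝ) • (Tmap '' K) := by
        intro d0 d1 d2 hdD e0 e1 e2
        have hmem : a + v3 d0 d1 d2 ∈ (3 : ℝ) • K := by
          rw [hfc]; exact Set.mem_add.2 ⟨a, ha, v3 d0 d1 d2, hdD, rfl⟩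
        rcases Set.mem_smul_set.1 hmem with ⟨k, hk, hks⟩
        have hd'eq : d' = v3 (d' 0) (d' 1) (d' 2) :=
          e3_ext (by rw [v3_apply0]) (by rw [v3_apply1]) (by rw [v3_apply2])
        have := Tmap_key (k := k) (a := a) hks e0 e1 e2
        rw [← hd'eq] at this
        rw [← this]
        exact Set.smul_mem_smul_set (Set.mem_image_of_mem _ hk)
      rcases hd' with rfl | rfl | rfl | rfl | rfl | rfl | rfl
      · exact main 1 0 1 (by simp [D]) (by norm_num [v3_apply0, v3_apply1, v3_apply2])
          (by norm_num [v3_apply0, v3_apply1, v3_apply2]) (by norm_num [v3_apply0, v3_apply1, v3_apply2])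
      · exact main 0 1 1 (by simp [D]) (by norm_num [v3_apply0, v3_apply1, v3_apply2])
          (by norm_num [v3_apply0, v3_apply1, v3_apply2]) (by norm_num [v3_apply0, v3_apply1, v3_apply2])
      · exact main 1 1 0 (by norm_num [D])
          (by norm_num [v3_apply0, v3_apply1, v3_apply2]) (by norm_num [v3_apply0, v3_apply1, v3_apply2]) (by norm_num [v3_apply0, v3_apply1, v3_apply2])
      · exact main 1 1 1 (by simp [D]) (by norm_num [v3_apply0, v3_apply1, v3_apply2])
          (by norm_num [v3_apply0, v3_apply1, v3_apply2]) (by norm_num [v3_apply0, v3_apply1, v3_apply2])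
      · exact main 1 1 2 (by simp [D]) (by norm_num [v3_apply0, v3_apply1, v3_apply2])
          (by norm_num [v3_apply0, v3_apply1, v3_apply2]) (by norm_num [v3_apply0, v3_apply1, v3_apply2])
      · exact main 2 1 1 (by simp [D]) (by norm_num [v3_apply0, v3_apply1, v3_apply2])
          (by norm_num [v3_apply0, v3_apply1, v3_apply2]) (by norm_num [v3_apply0, v3_apply1, v3_apply2])
      · exact main 1 2 1 (by simp [D]) (by norm_num [v3_apply0, v3_apply1, v3_apply2])
          (by norm_num [v3_apply0, v3_apply1, v3_apply2]) (by norm_num [v3_apply0, v3_apply1, v3_apply2])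
  -- by uniqueness of the attractor, Tmap '' K = K'
  have huniq : Tmap '' K = K' :=
    attractor_unique D' (Tmap '' K) K' (hne.image _) (hcomp.image Tmap_continuous)
      hne' hcomp' himg hfc'
  -- construct φ
  refine ⟨fun x => ⟨Tmap x, by rw [← huniq]; exact Set.mem_image_of_mem _ x.2⟩, 3,
    by norm_num, ⟨?_, ?_⟩, ?_⟩
  · intro x y hxy
    have : Tmap (x : E3) = Tmap (y : E3) := congrArg Subtype.val hxy
    exact Subtype.ext (Tmap_injective this)
  · rintro ⟨y, hy⟩
    rw [← huniq] at hy
    rcases hy with ⟨x, hx, hxy⟩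
    exact ⟨⟨x, hx⟩, Subtype.ext hxy⟩
  · intro x y
    set p : E3 := (x : E3) - (y : E3) with hp
    have hT : Tmap (x : E3) - Tmap (y : E3) = v3 (p 0 + p 1) (p 0 + p 1 + p 2) (p 1) := by
      refine e3_ext ?_ ?_ ?_ <;>
        simp only [PiLp.sub_apply, Tmap_apply0, Tmap_apply1, Tmap_apply2,
          v3_apply0, v3_apply1, v3_apply2, hp] <;> ring
    have hnp : ‖p‖ = Real.sqrt (p 0 ^ 2 + p 1 ^ 2 + p 2 ^ 2) := by
      rw [EuclideanSpace.norm_eq]; simp [Fin.sum_univ_three, sq_abs]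
    have hnT : ‖Tmap (x : E3) - Tmap (y : E3)‖ =
        Real.sqrt ((p 0 + p 1) ^ 2 + (p 0 + p 1 + p 2) ^ 2 + p 1 ^ 2) := by
      rw [hT, EuclideanSpace.norm_eq]
      simp [Fin.sum_univ_three, sq_abs, v3_apply0, v3_apply1, v3_apply2]
    have sqrt9 : Real.sqrt 9 = 3 := by
      rw [show (9 : ℝ) = 3 ^ 2 by norm_num, Real.sqrt_sq (by norm_num)]
    set S1 : ℝ := (p 0 + p 1) ^ 2 + (p 0 + p 1 + p 2) ^ 2 + p 1 ^ 2 with hS1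
    set S2 : ℝ := p 0 ^ 2 + p 1 ^ 2 + p 2 ^ 2 with hS2
    have hS1n : 0 ≤ S1 := by positivity
    have hS2n : 0 ≤ S2 := by positivity
    have key1 : Real.sqrt S2 ≤ 3 * Real.sqrt S1 := by
      calc Real.sqrt S2 ≤ Real.sqrt (9 * S1) := by
            refine Real.sqrt_le_sqrt ?_
            rw [hS1, hS2]
            nlinarith [sq_nonneg (p 0 + p 1), sq_nonneg (p 0 + p 1 + p 2), sq_nonneg (p 1),
              sq_nonneg (p 0 - p 1), sq_nonneg (p 0 + p 1 - p 2), sq_nonneg (p 0 + 2 * p 1 + p 2)]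
        _ = 3 * Real.sqrt S1 := by rw [Real.sqrt_mul (by norm_num), sqrt9]
    have key2 : Real.sqrt S1 ≤ 3 * Real.sqrt S2 := by
      calc Real.sqrt S1 ≤ Real.sqrt (9 * S2) := by
            refine Real.sqrt_le_sqrt ?_
            rw [hS1, hS2]
            nlinarith [sq_nonneg (p 0 - p 1), sq_nonneg (p 0 + p 1), sq_nonneg (p 1 - p 2),
              sq_nonneg (p 1 + p 2), sq_nonneg (p 0 - p 2), sq_nonneg (p 0 + p 2)]
        _ = 3 * Real.sqrt S2 := by rw [Real.sqrt_mul (by norm_num), sqrt9]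
    constructor
    · show (3 : ℝ)⁻¹ * ‖(x : E3) - (y : E3)‖ ≤ _
      rw [← hp, hnp, hnT]
      linarith
    · show _ ≤ (3 : ℝ) * ‖(x : E3) - (y : E3)‖
      rw [← hp, hnp, hnT]
      linarith
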